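/- arXiv:1906.02238 — 2 statements merged into one kernel-verified Lean document; each statement's English description precedes it below -/
import Mathlib

section
/- Let h_B* ∈ H and h_3 = argmin_{h∈H}{ε_B(h) + ε_S(h)} with γ_2 = ε_B(h_3) + ε_S(h_3). Then ε_S(h_B*) ≤ ε_B(h_B*) + γ_2 + (1/2) d_{H∆H}(D_S, D_B). -/
open MeasureTheory

/-- Probability that two hypotheses disagree under `D`. -/
noncomputable def errP {X : Type*} [MeasurableSpace X] (D : Measure X)
    (h h' : X → Bool) : ℝ :=
  (D {x | h x ≠ h' x}).toReal

/-- Error of hypothesis `h` against labeling function `f` under `D`. -/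
noncomputable def errL {X : Type*} [MeasurableSpace X] (D : Measure X)
    (f h : X → Bool) : ℝ :=
  (D {x | h x ≠ f x}).toReal

/-- The `H∆H`-divergence between two measures. -/
noncomputable def dHH {X : Type*} [MeasurableSpace X] (H : Set (X → Bool))
    (D₁ D₂ : Measure X) : ℝ :=
  2 * sSup ((fun p : (X → Bool) × (X → Bool) =>
      |errP D₁ p.1 p.2 - errP D₂ p.1 p.2|) '' (H ×ˢ H))

/-! Go through `h₃`: `ε_S(h_B) ≤ P_S(h_B ≠ h₃) + ε_S(h₃)` by the triangle inequality for
disagreement probabilities, `P_S(h_B ≠ h₃) ≤ P_B(h_B ≠ h₃) + d_{H∆H}/2` because `h_B, h₃ ∈ H`,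
and `P_B(h_B ≠ h₃) ≤ ε_B(h_B) + ε_B(h₃)` by the triangle inequality again. -/

section Disagreement

variable {X : Type*} [MeasurableSpace X] (D : Measure X)

theorem errL_eq_errP (f h : X → Bool) : errL D f h = errP D h f := rfl

theorem errP_comm (h h' : X → Bool) : errP D h h' = errP D h' h := by
  simp only [errP, ne_comm]

theorem errP_nonneg (h h' : X → Bool) : 0 ≤ errP D h h' := ENNReal.toReal_nonneg

theorem errP_le_one [IsZeroOrProbabilityMeasure D] (h h' : X → Bool) : errP D h h' ≤ 1 :=
  measureReal_le_one

theorem errP_triangle [IsFiniteMeasure D] (f g h : X → Bool) :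
    errP D f h ≤ errP D f g + errP D g h := by
  have hsub : {x | f x ≠ h x} ⊆ {x | f x ≠ g x} ∪ {x | g x ≠ h x} := by
    intro x hx
    by_cases hfg : f x = g x
    · exact Or.inr (show g x ≠ h x from hfg ▸ hx)
    · exact Or.inl hfg
  exact (measureReal_mono hsub).trans (measureReal_union_le _ _)

end Disagreement

theorem errP_le_errP_add_half_dHH {X : Type*} [MeasurableSpace X] (D₁ D₂ : Measure X)
    [IsZeroOrProbabilityMeasure D₁] [IsZeroOrProbabilityMeasure D₂] {H : Set (X → Bool)}
    {g g' : X → Bool} (hg : g ∈ H) (hg' : g' ∈ H) :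
    errP D₁ g g' ≤ errP D₂ g g' + (1/2) * dHH H D₁ D₂ := by
  have hbdd : BddAbove ((fun p : (X → Bool) × (X → Bool) =>
      |errP D₁ p.1 p.2 - errP D₂ p.1 p.2|) '' (H ×ˢ H)) := by
    refine ⟨1, ?_⟩
    rintro _ ⟨p, -, rfl⟩
    exact abs_sub_le_of_nonneg_of_le (errP_nonneg _ _ _) (errP_le_one _ _ _)
      (errP_nonneg _ _ _) (errP_le_one _ _ _)
  have hgap := (le_abs_self _).trans (le_csSup hbdd ⟨(g, g'), ⟨hg, hg'⟩, rfl⟩)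
  rw [dHH]
  linarith

theorem source_err_of_bridge_min_general {X : Type*} [MeasurableSpace X]
    (D_S D_B : Measure X)
    [IsProbabilityMeasure D_S] [IsProbabilityMeasure D_B]
    (f_S f_B : X → Bool)
    (H : Set (X → Bool))
    (hB h₃ : X → Bool) (hhB : hB ∈ H) (hh₃ : h₃ ∈ H)
    (γ₂ : ℝ) (hγ₂def : γ₂ = errL D_B f_B h₃ + errL D_S f_S h₃) :
    errL D_S f_S hB ≤ errL D_B f_B hB + γ₂ + (1/2) * dHH H D_S D_B := by
  simp only [hγ₂def, errL_eq_errP]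
  calc errP D_S hB f_S
      ≤ errP D_S hB h₃ + errP D_S h₃ f_S := errP_triangle D_S hB h₃ f_S
    _ ≤ errP D_B hB h₃ + (1/2) * dHH H D_S D_B + errP D_S h₃ f_S := by
      gcongr; exact errP_le_errP_add_half_dHH D_S D_B hhB hh₃
    _ ≤ errP D_B hB f_B + errP D_B f_B h₃ + (1/2) * dHH H D_S D_B + errP D_S h₃ f_S := by
      gcongr; exact errP_triangle D_B hB f_B h₃
    _ = errP D_B hB f_B + (errP D_B h₃ f_B + errP D_S h₃ f_S) + (1/2) * dHH H D_S D_B := by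
      rw [errP_comm D_B f_B h₃]; ring

theorem source_err_of_bridge_min {X : Type*} [MeasurableSpace X]
    (D_S D_B : Measure X)
    [IsProbabilityMeasure D_S] [IsProbabilityMeasure D_B]
    (f_S f_B : X → Bool) (mfS : Measurable f_S) (mfB : Measurable f_B)
    (H : Set (X → Bool)) (hmeas : ∀ g ∈ H, Measurable g)
    (hB h₃ : X → Bool) (hhB : hB ∈ H) (hh₃ : h₃ ∈ H)
    (γ₂ : ℝ) (hγ₂def : γ₂ = errL D_B f_B h₃ + errL D_S f_S h₃)
    (h₃min : ∀ h ∈ H, γ₂ ≤ errL D_B f_B h + errL D_S f_S h) :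
    errL D_S f_S hB ≤ errL D_B f_B hB + γ₂ + (1/2) * dHH H D_S D_B :=
  source_err_of_bridge_min_general D_S D_B f_S f_B H hB h₃ hhB hh₃ γ₂ hγ₂def
end

section
/- If h_1 ∈ H minimizes ε_S over H and h* ∈ H is arbitrary, then ε_T(h_1) ≤ ε_T(h*) + 2γ + d_{H∆H}(D_S, D_T), where γ = min_{h∈H}{ε_S(h) + ε_T(h)}. (Direct source-to-target version of the bridging bound, population form.) -/
/-!
Let `h'` attain `γ`. Moving from `h₁` to `h'` on the target costs `P_T(h₁ ≠ h')`, which differs from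
`P_S(h₁ ≠ h')` by at most `d_{H∆H}/2`; on the source, `P_S(h₁ ≠ h') ≤ ε_S(h₁) + ε_S(h') ≤ 2 ε_S(h')`
because `h₁` minimizes `ε_S`. Hence `ε_T(h₁) ≤ ε_T(h') + 2 ε_S(h') + d_{H∆H}/2`, which is at most
`2γ + d_{H∆H}` since all the errors involved are nonnegative.
-/

open MeasureTheory

section Disagreement

variable {X β : Type*} [MeasurableSpace X] (D : Measure X) [IsFiniteMeasure D]

theorem measureReal_setOf_ne_le (a b c : X → β) :
    D.real {x | a x ≠ c x} ≤ D.real {x | a x ≠ b x} + D.real {x | b x ≠ c x} := by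
  have hsub : {x | a x ≠ c x} ⊆ {x | a x ≠ b x} ∪ {x | b x ≠ c x} := by
    intro x (hac : a x ≠ c x)
    by_cases hab : a x = b x
    · exact Or.inr fun hbc => hac (hab.trans hbc)
    · exact Or.inl hab
  exact (measureReal_mono hsub).trans (measureReal_union_le _ _)

theorem errL_le_errL_add_errP (f h h' : X → Bool) :
    errL D f h ≤ errL D f h' + errP D h h' :=
  (measureReal_setOf_ne_le D h h' f).trans_eq (add_comm _ _)

theorem errP_le_errL_add_errL (f h h' : X → Bool) :
    errP D h h' ≤ errL D f h + errL D f h' := by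
  have hsymm : {x | f x ≠ h' x} = {x | h' x ≠ f x} := by simp only [ne_comm]
  have := measureReal_setOf_ne_le D h f h'
  rwa [hsymm] at this

end Disagreement

section Divergence

variable {X : Type*} [MeasurableSpace X] (H : Set (X → Bool)) (D₁ D₂ : Measure X)

theorem dHH_nonneg : 0 ≤ dHH H D₁ D₂ :=
  mul_nonneg zero_le_two <| Real.sSup_nonneg <| by
    rintro _ ⟨p, -, rfl⟩
    exact abs_nonneg _

theorem two_mul_abs_errP_sub_le_dHH [IsFiniteMeasure D₁] [IsFiniteMeasure D₂]
    {g g' : X → Bool} (hg : g ∈ H) (hg' : g' ∈ H) :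
    2 * |errP D₁ g g' - errP D₂ g g'| ≤ dHH H D₁ D₂ := by
  have hbdd : BddAbove ((fun p : (X → Bool) × (X → Bool) =>
      |errP D₁ p.1 p.2 - errP D₂ p.1 p.2|) '' (H ×ˢ H)) := by
    refine ⟨D₁.real Set.univ + D₂.real Set.univ, ?_⟩
    rintro _ ⟨⟨a, b⟩, -, rfl⟩
    have h₁ : errP D₁ a b ≤ D₁.real Set.univ := measureReal_mono (Set.subset_univ _)
    have h₂ : errP D₂ a b ≤ D₂.real Set.univ := measureReal_mono (Set.subset_univ _)
    have h₁' : 0 ≤ errP D₁ a b := measureReal_nonneg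
    have h₂' : 0 ≤ errP D₂ a b := measureReal_nonneg
    rw [abs_sub_le_iff]
    constructor <;> linarith
  exact mul_le_mul_of_nonneg_left (le_csSup hbdd ⟨(g, g'), ⟨hg, hg'⟩, rfl⟩) zero_le_two

end Divergence

theorem direct_adaptation_bound_general {X : Type*} [MeasurableSpace X]
    (D_S D_T : Measure X)
    [IsProbabilityMeasure D_S] [IsProbabilityMeasure D_T]
    (f_S f_T : X → Bool)
    (H : Set (X → Bool))
    (h₁ hstar : X → Bool) (hh₁ : h₁ ∈ H)
    (h₁min : ∀ h ∈ H, errL D_S f_S h₁ ≤ errL D_S f_S h)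
    (γ : ℝ)
    (hγ : IsLeast ((fun h => errL D_S f_S h + errL D_T f_T h) '' H) γ) :
    errL D_T f_T h₁ ≤ errL D_T f_T hstar + 2 * γ + dHH H D_S D_T := by
  obtain ⟨⟨h', hh', rfl⟩, -⟩ := hγ
  have target_step := errL_le_errL_add_errP D_T f_T h₁ h'
  have source_step := errP_le_errL_add_errL D_S f_S h₁ h'
  have shift := neg_le_abs (errP D_S h₁ h' - errP D_T h₁ h')
  have divergence := two_mul_abs_errP_sub_le_dHH H D_S D_T hh₁ hh'
  have hmin := h₁min h' hh'
  have hd := dHH_nonneg H D_S D_T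
  have hstar_nonneg : 0 ≤ errL D_T f_T hstar := measureReal_nonneg
  have h'_nonneg : 0 ≤ errL D_T f_T h' := measureReal_nonneg
  linarith

theorem direct_adaptation_bound {X : Type*} [MeasurableSpace X]
    (D_S D_T : Measure X)
    [IsProbabilityMeasure D_S] [IsProbabilityMeasure D_T]
    (f_S f_T : X → Bool) (mfS : Measurable f_S) (mfT : Measurable f_T)
    (H : Set (X → Bool)) (hmeas : ∀ g ∈ H, Measurable g)
    (h₁ hstar : X → Bool) (hh₁ : h₁ ∈ H) (hhstar : hstar ∈ H)
    (h₁min : ∀ h ∈ H, errL D_S f_S h₁ ≤ errL D_S f_S h)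
    (γ : ℝ)
    (hγ : IsLeast ((fun h => errL D_S f_S h + errL D_T f_T h) '' H) γ) :
    errL D_T f_T h₁ ≤ errL D_T f_T hstar + 2 * γ + dHH H D_S D_T :=
  direct_adaptation_bound_general D_S D_T f_S f_T H h₁ hstar hh₁ h₁min γ hγ
end
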